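/- For every k ≥ 4, the equation Xᵀ (J_k(0) ⊕ H₂(-1)) X = J_{k-2}(0) ⊕ I₂ is consistent; that is, there exists X ∈ ℂ^{(k+2)×k} with Xᵀ (J_k(0) ⊕ H₂(-1)) X = J_{k-2}(0) ⊕ I₂. -/
import Mathlib

open Matrix

/-- The `k×k` nilpotent upper Jordan block `J_k(0)`. -/
def Jblock (k : ℕ) : Matrix (Fin k) (Fin k) ℂ :=
  Matrix.of fun i j : Fin k => if (j : ℕ) = (i : ℕ) + 1 then 1 else 0

noncomputable def Xmat (m : ℕ) : Matrix (Fin (m+4) ⊕ Fin 2) (Fin (m+2) ⊕ Fin 2) ℂ :=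
  fun p q => match p, q with
  | .inl r, .inl c => if (r:ℕ) = (c:ℕ) then 1 else if (r:ℕ) = m+3 ∧ (c:ℕ) = m+1 then -1 else 0
  | .inr s, .inl c => if (c:ℕ) = m+1 then (if s = 0 then -1 else 1) else 0
  | .inl r, .inr t => if t = 0 then (if (r:ℕ) = m+2 ∨ (r:ℕ) = m+3 then 1 else 0)
      else (if (r:ℕ) = m+2 then Complex.I else if (r:ℕ) = m+3 then -Complex.I else 0)
  | .inr s, .inr t => if s = t then (if t = 0 then 1 else Complex.I) else 0

noncomputable def Ymat (m : ℕ) : Matrix (Fin (m+4) ⊕ Fin 2) (Fin (m+2) ⊕ Fin 2) ℂ :=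
  fun p q => match p, q with
  | .inl r, .inl c => if (c:ℕ) = (r:ℕ)+1 then 1 else if (r:ℕ) = m+2 ∧ (c:ℕ) = m+1 then -1 else 0
  | .inl r, .inr t => if t = 0 then (if (r:ℕ) = m+1 ∨ (r:ℕ) = m+2 then 1 else 0)
      else (if (r:ℕ) = m+1 then Complex.I else if (r:ℕ) = m+2 then -Complex.I else 0)
  | .inr s, .inl c => if (c:ℕ) = m+1 then 1 else 0
  | .inr s, .inr t => if s = 0 then (if t = 0 then 0 else Complex.I) else (if t = 0 then -1 else 0)

lemma sum_ite_coe {N : ℕ} (c : ℕ) (f : Fin N → ℂ) :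
    (∑ q : Fin N, (if (q : ℕ) = c then (1:ℂ) else 0) * f q)
      = if h : c < N then f ⟨c, h⟩ else 0 := by
  split_ifs with h
  · rw [Finset.sum_eq_single ⟨c, h⟩]
    · simp
    · intro q _ hq
      rw [if_neg (fun hc => hq (Fin.ext hc)), zero_mul]
    · simp
  · apply Finset.sum_eq_zero; intro q _
    have := q.isLt
    rw [if_neg (by omega), zero_mul]

lemma sum_two {N : ℕ} (f : Fin N → ℂ) (a b : Fin N) (hab : a ≠ b)
    (h0 : ∀ r, r ≠ a → r ≠ b → f r = 0) :
    ∑ r, f r = f a + f b := by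
  classical
  rw [← Finset.sum_subset (Finset.subset_univ ({a, b} : Finset (Fin N)))
    (fun x _ hx => by simp at hx; exact h0 x hx.1 hx.2)]
  rw [Finset.sum_pair hab]

lemma AX_eq (m : ℕ) :
    Matrix.fromBlocks (Jblock (m+4)) 0 0 (!![0, 1; -1, 0] : Matrix (Fin 2) (Fin 2) ℂ) * Xmat m
      = Ymat m := by
  ext p β
  rcases p with r | s
  · rw [mul_apply, Fintype.sum_sum_type]
    have h1 : ∀ s : Fin 2,
        Matrix.fromBlocks (Jblock (m+4)) 0 0 (!![0, 1; -1, 0] : Matrix (Fin 2) (Fin 2) ℂ)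
          (Sum.inl r) (Sum.inr s) * Xmat m (Sum.inr s) β = 0 := by
      intro s; simp [Matrix.fromBlocks_apply₁₂]
    simp only [h1, Finset.sum_const_zero, add_zero]
    simp only [Matrix.fromBlocks_apply₁₁, Jblock, Matrix.of_apply]
    rw [sum_ite_coe]
    have hr := r.isLt
    rcases β with c | t
    · have hc := c.isLt
      split_ifs with h <;> simp only [Xmat, Ymat, Fin.mk_zero, Fin.mk_one] <;> split_ifs <;> first | rfl | omega
    · fin_cases t <;>
        · split_ifs with h <;> simp only [Xmat, Ymat, Fin.mk_zero, Fin.mk_one] <;> split_ifs <;> first | rfl | omega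
  · rw [mul_apply, Fintype.sum_sum_type]
    have h1 : ∀ q : Fin (m+4),
        Matrix.fromBlocks (Jblock (m+4)) 0 0 (!![0, 1; -1, 0] : Matrix (Fin 2) (Fin 2) ℂ)
          (Sum.inr s) (Sum.inl q) * Xmat m (Sum.inl q) β = 0 := by
      intro q; simp [Matrix.fromBlocks_apply₂₁]
    simp only [h1]
    rw [Finset.sum_const_zero, zero_add, Fin.sum_univ_two]
    fin_cases s <;> rcases β with c | t
    · simp [Xmat, Ymat]
    · fin_cases t <;> simp [Xmat, Ymat]
    · simp [Xmat, Ymat]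
    · fin_cases t <;> simp [Xmat, Ymat]

set_option maxHeartbeats 2000000 in
/-- For every `k ≥ 4`, the equation `Xᵀ (J_k(0) ⊕ H₂(-1)) X = J_{k-2}(0) ⊕ I₂` is consistent. -/
theorem Jk_H2_consistent (k : ℕ) (hk : 4 ≤ k) :
    ∃ X : Matrix (Fin k ⊕ Fin 2) (Fin (k - 2) ⊕ Fin 2) ℂ,
      Xᵀ * (Matrix.fromBlocks (Jblock k) 0 0 (!![0, 1; -1, 0] : Matrix (Fin 2) (Fin 2) ℂ)) * X =
        Matrix.fromBlocks (Jblock (k - 2)) 0 0 (1 : Matrix (Fin 2) (Fin 2) ℂ) := by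
  obtain ⟨m, rfl⟩ : ∃ m, k = m + 4 := ⟨k - 4, by omega⟩
  refine ⟨Xmat m, ?_⟩
  show (Xmat m)ᵀ *
      (Matrix.fromBlocks (Jblock (m+4)) 0 0 (!![0, 1; -1, 0] : Matrix (Fin 2) (Fin 2) ℂ)) *
      Xmat m = Matrix.fromBlocks (Jblock (m+2)) 0 0 (1 : Matrix (Fin 2) (Fin 2) ℂ)
  rw [Matrix.mul_assoc, AX_eq]
  ext α β
  rw [mul_apply, Fintype.sum_sum_type]
  simp only [transpose_apply, Fin.sum_univ_two]
  rcases α with c | s <;> rcases β with c' | t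
  · have hc := c.isLt; have hc' := c'.isLt
    rw [sum_two (fun r => Xmat m (Sum.inl r) (Sum.inl c) * Ymat m (Sum.inl r) (Sum.inl c'))
      ⟨(c:ℕ), by omega⟩ ⟨m+3, by omega⟩ (by simp [Fin.ext_iff]; omega)
      (fun r hra hrb => by
        simp only [ne_eq, Fin.ext_iff] at hra hrb
        simp only [Xmat, Ymat, Fin.mk_zero, Fin.mk_one]
        split_ifs <;> first | omega | (exfalso; omega) | ring1 | (simp_all; all_goals first | rfl | omega | (exfalso; omega) | ring1 | linear_combination Complex.I_mul_I | linear_combination -Complex.I_mul_I))]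
    simp only [Xmat, Ymat, Fin.mk_zero, Fin.mk_one, Matrix.fromBlocks_apply₁₁, Jblock, Matrix.of_apply]
    split_ifs <;> first | omega | (exfalso; omega) | ring1 | (simp_all; all_goals first | rfl | omega | (exfalso; omega) | ring1 | linear_combination Complex.I_mul_I | linear_combination -Complex.I_mul_I)
  · have hc := c.isLt
    rw [sum_two (fun r => Xmat m (Sum.inl r) (Sum.inl c) * Ymat m (Sum.inl r) (Sum.inr t))
      ⟨(c:ℕ), by omega⟩ ⟨m+3, by omega⟩ (by simp [Fin.ext_iff]; omega)
      (fun r hra hrb => by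
        simp only [ne_eq, Fin.ext_iff] at hra hrb
        simp only [Xmat, Ymat, Fin.mk_zero, Fin.mk_one]
        split_ifs <;> first | omega | (exfalso; omega) | ring1 | (simp_all; all_goals first | rfl | omega | (exfalso; omega) | ring1 | linear_combination Complex.I_mul_I | linear_combination -Complex.I_mul_I))]
    fin_cases t <;>
      · simp only [Xmat, Ymat, Fin.mk_zero, Fin.mk_one, Matrix.fromBlocks_apply₁₂, Matrix.zero_apply]
        split_ifs <;> first | omega | (exfalso; omega) | ring1 | (simp_all; all_goals first | rfl | omega | (exfalso; omega) | ring1 | linear_combination Complex.I_mul_I | linear_combination -Complex.I_mul_I)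
  · rw [sum_two (fun r => Xmat m (Sum.inl r) (Sum.inr s) * Ymat m (Sum.inl r) (Sum.inl c'))
      ⟨m+2, by omega⟩ ⟨m+3, by omega⟩ (by simp [Fin.ext_iff])
      (fun r hra hrb => by
        simp only [ne_eq, Fin.ext_iff] at hra hrb
        fin_cases s <;>
          · simp only [Xmat, Ymat, Fin.mk_zero, Fin.mk_one]
            split_ifs <;> first | omega | (exfalso; omega) | ring1 | (simp_all; all_goals first | rfl | omega | (exfalso; omega) | ring1 | linear_combination Complex.I_mul_I | linear_combination -Complex.I_mul_I))]
    have hc' := c'.isLt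
    fin_cases s <;>
      · simp only [Xmat, Ymat, Fin.mk_zero, Fin.mk_one, Matrix.fromBlocks_apply₂₁, Matrix.zero_apply]
        split_ifs <;> first | omega | (exfalso; omega) | ring1 | (simp_all; all_goals first | rfl | omega | (exfalso; omega) | ring1 | linear_combination Complex.I_mul_I | linear_combination -Complex.I_mul_I)
  · rw [sum_two (fun r => Xmat m (Sum.inl r) (Sum.inr s) * Ymat m (Sum.inl r) (Sum.inr t))
      ⟨m+2, by omega⟩ ⟨m+3, by omega⟩ (by simp [Fin.ext_iff])
      (fun r hra hrb => by
        simp only [ne_eq, Fin.ext_iff] at hra hrb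
        fin_cases s <;> fin_cases t <;>
          · simp only [Xmat, Ymat, Fin.mk_zero, Fin.mk_one]
            split_ifs <;> first | omega | (exfalso; omega) | ring1 | (simp_all; all_goals first | rfl | omega | (exfalso; omega) | ring1 | linear_combination Complex.I_mul_I | linear_combination -Complex.I_mul_I))]
    fin_cases s <;> fin_cases t <;>
      · simp only [Xmat, Ymat, Fin.mk_zero, Fin.mk_one, Matrix.fromBlocks_apply₂₂, Matrix.one_apply]
        split_ifs <;>
          first | omega | (exfalso; omega) | ring1 | (simp_all; all_goals first | rfl | omega | (exfalso; omega) | ring1 | linear_combination Complex.I_mul_I | linear_combination -Complex.I_mul_I) | simp | linear_combination Complex.I_mul_I |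
            linear_combination -Complex.I_mul_I
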